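/- arXiv:2604.07898 — 5 statements merged into one kernel-verified Lean document; each statement's English description precedes it below -/
import Mathlib

section
/- Given any smooth map (ℓ,β): I → ℝ², the pair (γ,ν) defined by ν(t) = (cos θ(t), sin θ(t)) with θ an antiderivative of ℓ, and γ(t) = (-∫ β(t) sin θ(t) dt, ∫ β(t) cos θ(t) dt), is a Legendre curve whose curvature is (ℓ,β); that is, γ'(t)·ν(t) = 0, |ν(t)| = 1, ν'(t)·μ(t) = ℓ(t) and γ'(t)·μ(t) = β(t) for all t, where μ(t) = J(ν(t)) is ν rotated by π/2. -/
noncomputable section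
open Real

/-- Euclidean dot product on ℝ². -/
def dot (p q : ℝ × ℝ) : ℝ := p.1 * q.1 + p.2 * q.2

/-- Anticlockwise rotation by π/2. -/
def Jrot (p : ℝ × ℝ) : ℝ × ℝ := (-p.2, p.1)

/-- Existence theorem for Legendre curves: from any smooth (ℓ,β) we construct a
Legendre curve with curvature (ℓ,β), via an antiderivative θ of ℓ and
antiderivatives F, G of β sin θ, β cos θ. -/
theorem existence_Legendre (I : Set ℝ) (ℓ β θ F G : ℝ → ℝ)
    (hℓ : ContDiff ℝ (⊤ : ℕ∞) ℓ) (hβ : ContDiff ℝ (⊤ : ℕ∞) β)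
    (hθ : ∀ t, HasDerivAt θ (ℓ t) t)
    (hF : ∀ t, HasDerivAt F (β t * Real.sin (θ t)) t)
    (hG : ∀ t, HasDerivAt G (β t * Real.cos (θ t)) t) :
    ∀ t ∈ I,
      let γ : ℝ → ℝ × ℝ := fun s => (-F s, G s)
      let ν : ℝ → ℝ × ℝ := fun s => (Real.cos (θ s), Real.sin (θ s))
      let μ : ℝ → ℝ × ℝ := fun s => Jrot (ν s)
      dot (deriv γ t) (ν t) = 0 ∧
      dot (ν t) (ν t) = 1 ∧
      dot (deriv ν t) (μ t) = ℓ t ∧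
      dot (deriv γ t) (μ t) = β t := by
  intro t ht γ ν μ
  have hγ : HasDerivAt γ (-(β t * Real.sin (θ t)), β t * Real.cos (θ t)) t :=
    HasDerivAt.prodMk ((hF t).neg) (hG t)
  have hν : HasDerivAt ν (-Real.sin (θ t) * ℓ t, Real.cos (θ t) * ℓ t) t :=
    HasDerivAt.prodMk (((hθ t).cos)) ((hθ t).sin)
  have hdγ : deriv γ t = (-(β t * Real.sin (θ t)), β t * Real.cos (θ t)) := hγ.deriv
  have hdν : deriv ν t = (-Real.sin (θ t) * ℓ t, Real.cos (θ t) * ℓ t) := hν.deriv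
  have key := Real.sin_sq_add_cos_sq (θ t)
  refine ⟨?_, ?_, ?_, ?_⟩ <;>
    simp [hdγ, hdν, dot, Jrot, ν, μ]
  · ring
  · linear_combination key
  · linear_combination ℓ t * key
  · linear_combination β t * key
end
end

section
/- Let (γ,ν) and (γ̃,ν̃): I → ℝ² × S¹ be Legendre curves with curvatures (ℓ,β) and (ℓ̃,β̃). If (ℓ,β) = (ℓ̃,β̃) as functions on I (with I connected), then there exist A ∈ SO(2) and a ∈ ℝ² with γ̃(t) = A γ(t) + a and ν̃(t) = A ν(t) for all t ∈ I. -/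
noncomputable section

/-- A rotation of ℝ², i.e. an element of SO(2), given by cos/sin entries. -/
def rot (c s : ℝ) (p : ℝ × ℝ) : ℝ × ℝ := (c * p.1 - s * p.2, s * p.1 + c * p.2)

private lemma myHasDerivAt_fst {f : ℝ → ℝ × ℝ} {d : ℝ × ℝ} {t : ℝ}
    (h : HasDerivAt f d t) : HasDerivAt (fun x => (f x).1) d.1 t := by
  have := ((ContinuousLinearMap.fst ℝ ℝ ℝ).hasFDerivAt.comp t h.hasFDerivAt).hasDerivAt
  simp at this; exact this

private lemma myHasDerivAt_snd {f : ℝ → ℝ × ℝ} {d : ℝ × ℝ} {t : ℝ}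
    (h : HasDerivAt f d t) : HasDerivAt (fun x => (f x).2) d.2 t := by
  have := ((ContinuousLinearMap.snd ℝ ℝ ℝ).hasFDerivAt.comp t h.hasFDerivAt).hasDerivAt
  simp at this; exact this

private lemma deriv_zero_of_eqOn_zero {f : ℝ → ℝ} {d t : ℝ} {s : Set ℝ}
    (hs : Convex ℝ s) (hf : HasDerivAt f d t) (h0 : ∀ x ∈ s, f x = 0)
    (ht : t ∈ s) (hnt : ∃ t₁ ∈ s, t₁ ≠ t) : d = 0 := by
  obtain ⟨t₁, ht₁, hne⟩ := hnt
  rcases hne.lt_or_gt with h | h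
  · have hsub : Set.Icc t₁ t ⊆ s := hs.ordConnected.out ht₁ ht
    have h1 : HasDerivWithinAt f d (Set.Icc t₁ t) t := hf.hasDerivWithinAt
    have h2 : HasDerivWithinAt f 0 (Set.Icc t₁ t) t :=
      (hasDerivWithinAt_const t _ (0:ℝ)).congr (fun x hx => h0 x (hsub hx)) (h0 t ht)
    have hu := uniqueDiffOn_Icc h t (Set.right_mem_Icc.2 h.le)
    rw [← h1.derivWithin hu, ← h2.derivWithin hu]
  · have hsub : Set.Icc t t₁ ⊆ s := hs.ordConnected.out ht ht₁
    have h1 : HasDerivWithinAt f d (Set.Icc t t₁) t := hf.hasDerivWithinAt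
    have h2 : HasDerivWithinAt f 0 (Set.Icc t t₁) t :=
      (hasDerivWithinAt_const t _ (0:ℝ)).congr (fun x hx => h0 x (hsub hx)) (h0 t ht)
    have hu := uniqueDiffOn_Icc h t (Set.left_mem_Icc.2 h.le)
    rw [← h1.derivWithin hu, ← h2.derivWithin hu]

private lemma const_on_convex {f : ℝ → ℝ} {s : Set ℝ} (hs : Convex ℝ s)
    (hf : ∀ x ∈ s, DifferentiableAt ℝ f x) (hd : ∀ x ∈ s, deriv f x = 0)
    {x y : ℝ} (hx : x ∈ s) (hy : y ∈ s) : f y = f x := by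
  have h := hs.norm_image_sub_le_of_norm_deriv_le (C := 0) hf
    (fun z hz => by simp [hd z hz]) hx hy
  have h0 : ‖f y - f x‖ ≤ 0 := by simpa using h
  have := norm_le_zero_iff.1 h0
  linarith [sub_eq_zero.1 this]

private lemma repAlg (d g : ℝ × ℝ) (hu : g.1 * g.1 + g.2 * g.2 = 1)
    (ho : g.1 * d.1 + g.2 * d.2 = 0) :
    d.1 = -(dot d (Jrot g)) * g.2 ∧ d.2 = (dot d (Jrot g)) * g.1 := by
  simp only [dot, Jrot]
  constructor
  · linear_combination g.1 * ho - d.1 * hu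
  · linear_combination g.2 * ho - d.2 * hu

set_option maxHeartbeats 1000000 in
/-- Uniqueness theorem for Legendre curves: if two Legendre curves on a connected
interval have the same curvature, they are congruent. -/
theorem uniqueness_Legendre (I : Set ℝ) (hI : Convex ℝ I)
    (γ ν γ' ν' : ℝ → ℝ × ℝ)
    (hγ : ContDiff ℝ (⊤ : ℕ∞) γ) (hν : ContDiff ℝ (⊤ : ℕ∞) ν)
    (hγ' : ContDiff ℝ (⊤ : ℕ∞) γ') (hν' : ContDiff ℝ (⊤ : ℕ∞) ν')
    (hunit : ∀ t ∈ I, dot (ν t) (ν t) = 1)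
    (hunit' : ∀ t ∈ I, dot (ν' t) (ν' t) = 1)
    (hleg : ∀ t ∈ I, dot (deriv γ t) (ν t) = 0)
    (hleg' : ∀ t ∈ I, dot (deriv γ' t) (ν' t) = 0)
    (hcurv : ∀ t ∈ I,
      dot (deriv ν t) (Jrot (ν t)) = dot (deriv ν' t) (Jrot (ν' t)) ∧
      dot (deriv γ t) (Jrot (ν t)) = dot (deriv γ' t) (Jrot (ν' t))) :
    ∃ c s : ℝ, ∃ a : ℝ × ℝ, c ^ 2 + s ^ 2 = 1 ∧
      ∀ t ∈ I, γ' t = rot c s (γ t) + a ∧ ν' t = rot c s (ν t) := by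
  classical
  rcases Set.eq_empty_or_nonempty I with hIe | ⟨t₀, ht₀⟩
  · exact ⟨1, 0, 0, by norm_num, fun t ht => absurd ht (by simp [hIe])⟩
  have Dν : Differentiable ℝ ν := hν.differentiable (by simp)
  have Dν' : Differentiable ℝ ν' := hν'.differentiable (by simp)
  have Dγ : Differentiable ℝ γ := hγ.differentiable (by simp)
  have Dγ' : Differentiable ℝ γ' := hγ'.differentiable (by simp)
  have hu0 : (ν t₀).1 * (ν t₀).1 + (ν t₀).2 * (ν t₀).2 = 1 := by
    simpa [dot] using hunit t₀ ht₀
  have hu0' : (ν' t₀).1 * (ν' t₀).1 + (ν' t₀).2 * (ν' t₀).2 = 1 := by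
    simpa [dot] using hunit' t₀ ht₀
  set c : ℝ := (ν t₀).1 * (ν' t₀).1 + (ν t₀).2 * (ν' t₀).2 with hc
  set s : ℝ := (ν t₀).1 * (ν' t₀).2 - (ν t₀).2 * (ν' t₀).1 with hs
  have hcs : c ^ 2 + s ^ 2 = 1 := by
    rw [hc, hs]
    linear_combination ((ν' t₀).1 * (ν' t₀).1 + (ν' t₀).2 * (ν' t₀).2) * hu0 + hu0'
  have hrot₀ : ν' t₀ = rot c s (ν t₀) := by
    refine Prod.ext ?_ ?_ <;> simp only [rot, hc, hs]
    · linear_combination -(ν' t₀).1 * hu0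
    · linear_combination -(ν' t₀).2 * hu0
  by_cases hsing : ∀ t ∈ I, t = t₀
  · refine ⟨c, s, γ' t₀ - rot c s (γ t₀), hcs, fun t ht => ?_⟩
    rw [hsing t ht]
    exact ⟨by abel, hrot₀⟩
  push_neg at hsing
  obtain ⟨t₁, ht₁, ht₁ne⟩ := hsing
  have hnt : ∀ t ∈ I, ∃ u ∈ I, u ≠ t := by
    intro t ht
    by_cases h : t = t₀
    · exact ⟨t₁, ht₁, by rw [h]; exact ht₁ne⟩
    · exact ⟨t₀, ht₀, fun e => h e.symm⟩
  -- orthogonality of derivative to a unit field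
  have orth : ∀ (f : ℝ → ℝ × ℝ), Differentiable ℝ f →
      (∀ x ∈ I, dot (f x) (f x) = 1) → ∀ t ∈ I,
      (f t).1 * (deriv f t).1 + (f t).2 * (deriv f t).2 = 0 := by
    intro f hf hu t ht
    have h1 : HasDerivAt (fun x => (f x).1) (deriv f t).1 t :=
      myHasDerivAt_fst (hf t).hasDerivAt
    have h2 : HasDerivAt (fun x => (f x).2) (deriv f t).2 t :=
      myHasDerivAt_snd (hf t).hasDerivAt
    have hD : HasDerivAt (fun x => (f x).1 * (f x).1 + (f x).2 * (f x).2 - 1)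
        ((deriv f t).1 * (f t).1 + (f t).1 * (deriv f t).1 +
          ((deriv f t).2 * (f t).2 + (f t).2 * (deriv f t).2)) t :=
      ((h1.mul h1).add (h2.mul h2)).sub_const 1
    have hz := deriv_zero_of_eqOn_zero hI hD
      (fun x hx => by have := hu x hx; simp only [dot] at this; linarith)
      ht (hnt t ht)
    linarith
  have hνd : ∀ t ∈ I, (deriv ν t).1 = -(dot (deriv ν t) (Jrot (ν t))) * (ν t).2 ∧
      (deriv ν t).2 = (dot (deriv ν t) (Jrot (ν t))) * (ν t).1 := fun t ht =>
    repAlg _ _ (by simpa [dot] using hunit t ht) (orth ν Dν hunit t ht)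
  have hν'd : ∀ t ∈ I, (deriv ν' t).1 = -(dot (deriv ν t) (Jrot (ν t))) * (ν' t).2 ∧
      (deriv ν' t).2 = (dot (deriv ν t) (Jrot (ν t))) * (ν' t).1 := by
    intro t ht
    have h := repAlg (deriv ν' t) (ν' t) (by simpa [dot] using hunit' t ht)
      (orth ν' Dν' hunit' t ht)
    rwa [← (hcurv t ht).1] at h
  have hγd : ∀ t ∈ I, (deriv γ t).1 = -(dot (deriv γ t) (Jrot (ν t))) * (ν t).2 ∧
      (deriv γ t).2 = (dot (deriv γ t) (Jrot (ν t))) * (ν t).1 := fun t ht =>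
    repAlg _ _ (by simpa [dot] using hunit t ht)
      (by have := hleg t ht; simp only [dot] at this; linear_combination this)
  have hγ'd : ∀ t ∈ I, (deriv γ' t).1 = -(dot (deriv γ t) (Jrot (ν t))) * (ν' t).2 ∧
      (deriv γ' t).2 = (dot (deriv γ t) (Jrot (ν t))) * (ν' t).1 := by
    intro t ht
    have h := repAlg (deriv γ' t) (ν' t) (by simpa [dot] using hunit' t ht)
      (by have := hleg' t ht; simp only [dot] at this; linear_combination this)
    rwa [← (hcurv t ht).2] at h
  -- the scalar invariant F t = ⟪ν' t, rot c s (ν t)⟫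
  set F : ℝ → ℝ := fun x => (ν' x).1 * (c * (ν x).1 - s * (ν x).2) +
      (ν' x).2 * (s * (ν x).1 + c * (ν x).2) with hF
  have hFd : ∀ t : ℝ, HasDerivAt F
      ((deriv ν' t).1 * (c * (ν t).1 - s * (ν t).2) +
        (ν' t).1 * (c * (deriv ν t).1 - s * (deriv ν t).2) +
        ((deriv ν' t).2 * (s * (ν t).1 + c * (ν t).2) +
          (ν' t).2 * (s * (deriv ν t).1 + c * (deriv ν t).2))) t := by
    intro t
    have hn1 : HasDerivAt (fun x => (ν x).1) (deriv ν t).1 t :=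
      myHasDerivAt_fst (Dν t).hasDerivAt
    have hn2 : HasDerivAt (fun x => (ν x).2) (deriv ν t).2 t :=
      myHasDerivAt_snd (Dν t).hasDerivAt
    have hm1 : HasDerivAt (fun x => (ν' x).1) (deriv ν' t).1 t :=
      myHasDerivAt_fst (Dν' t).hasDerivAt
    have hm2 : HasDerivAt (fun x => (ν' x).2) (deriv ν' t).2 t :=
      myHasDerivAt_snd (Dν' t).hasDerivAt
    exact (hm1.mul ((hn1.const_mul c).sub (hn2.const_mul s))).add
      (hm2.mul ((hn1.const_mul s).add (hn2.const_mul c)))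
  have hFconst : ∀ t ∈ I, F t = F t₀ := by
    intro t ht
    refine const_on_convex hI (fun x _ => (hFd x).differentiableAt) ?_ ht₀ ht
    intro x hx
    rw [(hFd x).deriv]
    obtain ⟨e1, e2⟩ := hνd x hx
    obtain ⟨e3, e4⟩ := hν'd x hx
    rw [e1, e2, e3, e4]; ring
  have hF0 : F t₀ = 1 := by
    have h1 := congrArg Prod.fst hrot₀
    have h2 := congrArg Prod.snd hrot₀
    simp only [rot] at h1 h2
    simp only [hF]
    rw [← h1, ← h2]
    simpa [dot] using hunit' t₀ ht₀
  have hν'rot : ∀ t ∈ I, ν' t = rot c s (ν t) := by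
    intro t ht
    have hFt : (ν' t).1 * (c * (ν t).1 - s * (ν t).2) +
        (ν' t).2 * (s * (ν t).1 + c * (ν t).2) = 1 := by
      have := (hFconst t ht).trans hF0
      simpa [hF] using this
    have hu : (ν t).1 * (ν t).1 + (ν t).2 * (ν t).2 = 1 := by
      simpa [dot] using hunit t ht
    have hu' : (ν' t).1 * (ν' t).1 + (ν' t).2 * (ν' t).2 = 1 := by
      simpa [dot] using hunit' t ht
    have hr : (c * (ν t).1 - s * (ν t).2) ^ 2 + (s * (ν t).1 + c * (ν t).2) ^ 2 = 1 := by
      linear_combination ((ν t).1 * (ν t).1 + (ν t).2 * (ν t).2) * hcs + hu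
    have key : ((ν' t).1 - (c * (ν t).1 - s * (ν t).2)) ^ 2 +
        ((ν' t).2 - (s * (ν t).1 + c * (ν t).2)) ^ 2 = 0 := by
      linear_combination hu' + hr - 2 * hFt
    have e1 : (ν' t).1 - (c * (ν t).1 - s * (ν t).2) = 0 := by
      have h1 : ((ν' t).1 - (c * (ν t).1 - s * (ν t).2)) ^ 2 = 0 := by
        linarith [key, sq_nonneg ((ν' t).1 - (c * (ν t).1 - s * (ν t).2)),
          sq_nonneg ((ν' t).2 - (s * (ν t).1 + c * (ν t).2))]
      exact pow_eq_zero_iff (two_ne_zero) |>.1 h1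
    have e2 : (ν' t).2 - (s * (ν t).1 + c * (ν t).2) = 0 := by
      have h1 : ((ν' t).2 - (s * (ν t).1 + c * (ν t).2)) ^ 2 = 0 := by
        linarith [key, sq_nonneg ((ν' t).1 - (c * (ν t).1 - s * (ν t).2)),
          sq_nonneg ((ν' t).2 - (s * (ν t).1 + c * (ν t).2))]
      exact pow_eq_zero_iff (two_ne_zero) |>.1 h1
    refine Prod.ext ?_ ?_ <;> simp only [rot] <;> linarith
  -- the translation part
  set G1 : ℝ → ℝ := fun x => (γ' x).1 - (c * (γ x).1 - s * (γ x).2) with hG1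
  set G2 : ℝ → ℝ := fun x => (γ' x).2 - (s * (γ x).1 + c * (γ x).2) with hG2
  have hG1d : ∀ t : ℝ, HasDerivAt G1
      ((deriv γ' t).1 - (c * (deriv γ t).1 - s * (deriv γ t).2)) t := by
    intro t
    have hg1 : HasDerivAt (fun x => (γ x).1) (deriv γ t).1 t :=
      myHasDerivAt_fst (Dγ t).hasDerivAt
    have hg2 : HasDerivAt (fun x => (γ x).2) (deriv γ t).2 t :=
      myHasDerivAt_snd (Dγ t).hasDerivAt
    have hg1' : HasDerivAt (fun x => (γ' x).1) (deriv γ' t).1 t :=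
      myHasDerivAt_fst (Dγ' t).hasDerivAt
    exact hg1'.sub ((hg1.const_mul c).sub (hg2.const_mul s))
  have hG2d : ∀ t : ℝ, HasDerivAt G2
      ((deriv γ' t).2 - (s * (deriv γ t).1 + c * (deriv γ t).2)) t := by
    intro t
    have hg1 : HasDerivAt (fun x => (γ x).1) (deriv γ t).1 t :=
      myHasDerivAt_fst (Dγ t).hasDerivAt
    have hg2 : HasDerivAt (fun x => (γ x).2) (deriv γ t).2 t :=
      myHasDerivAt_snd (Dγ t).hasDerivAt
    have hg2' : HasDerivAt (fun x => (γ' x).2) (deriv γ' t).2 t :=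
      myHasDerivAt_snd (Dγ' t).hasDerivAt
    exact hg2'.sub ((hg1.const_mul s).add (hg2.const_mul c))
  have hG1const : ∀ t ∈ I, G1 t = G1 t₀ := by
    intro t ht
    refine const_on_convex hI (fun x _ => (hG1d x).differentiableAt) ?_ ht₀ ht
    intro x hx
    rw [(hG1d x).deriv]
    obtain ⟨e1, e2⟩ := hγd x hx
    obtain ⟨e3, _⟩ := hγ'd x hx
    have hm2 : (ν' x).2 = s * (ν x).1 + c * (ν x).2 := by
      have := congrArg Prod.snd (hν'rot x hx); simpa [rot] using this
    rw [e1, e2, e3, hm2]; ring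
  have hG2const : ∀ t ∈ I, G2 t = G2 t₀ := by
    intro t ht
    refine const_on_convex hI (fun x _ => (hG2d x).differentiableAt) ?_ ht₀ ht
    intro x hx
    rw [(hG2d x).deriv]
    obtain ⟨e1, e2⟩ := hγd x hx
    obtain ⟨_, e4⟩ := hγ'd x hx
    have hm1 : (ν' x).1 = c * (ν x).1 - s * (ν x).2 := by
      have := congrArg Prod.fst (hν'rot x hx); simpa [rot] using this
    rw [e1, e2, e4, hm1]; ring
  refine ⟨c, s, γ' t₀ - rot c s (γ t₀), hcs, fun t ht => ⟨?_, hν'rot t ht⟩⟩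
  have h1 := hG1const t ht
  have h2 := hG2const t ht
  simp only [hG1, hG2] at h1 h2
  refine Prod.ext ?_ ?_ <;>
    simp only [rot, Prod.fst_add, Prod.snd_add, Prod.fst_sub, Prod.snd_sub] <;>
    linarith
end
end

section
/- Let (γ,ν): I → ℝ² × S¹ be a Legendre curve with curvature (ℓ,β), write ν = (a,b), and let Φ(x,y) = (a₁₁x+a₁₂y, a₂₁x+a₂₂y) be a linear isomorphism of ℝ² (a₁₁a₂₂−a₁₂a₂₁ ≠ 0). Set ν̄ = (a₂₂a−a₂₁b, −a₁₂a+a₁₁b) and ν̃ = ν̄/|ν̄|. Then (Φ∘γ, ν̃) is a Legendre curve with curvature ((a₁₁a₂₂−a₁₂a₂₁) ℓ / |ν̄|², |ν̄| β). -/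
noncomputable section

set_option maxHeartbeats 1000000 in
/-- Effect of a linear isomorphism Φ of ℝ² on a Legendre curve: (Φ∘γ, ν̄/|ν̄|)
is a Legendre curve with curvature ((det Φ) ℓ / |ν̄|², |ν̄| β). -/
theorem linear_transformation_curvature (I : Set ℝ) (γ ν : ℝ → ℝ × ℝ)
    (hγ : ContDiff ℝ (⊤ : ℕ∞) γ) (hν : ContDiff ℝ (⊤ : ℕ∞) ν)
    (hunit : ∀ t ∈ I, dot (ν t) (ν t) = 1)
    (hleg : ∀ t ∈ I, dot (deriv γ t) (ν t) = 0)
    (a11 a12 a21 a22 : ℝ) (hdet : a11 * a22 - a12 * a21 ≠ 0) :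
    ∀ t ∈ I,
      let γ' : ℝ → ℝ × ℝ :=
        fun u => (a11 * (γ u).1 + a12 * (γ u).2, a21 * (γ u).1 + a22 * (γ u).2)
      let nbar : ℝ → ℝ × ℝ :=
        fun u => (a22 * (ν u).1 - a21 * (ν u).2, -a12 * (ν u).1 + a11 * (ν u).2)
      let nrm : ℝ → ℝ := fun u => Real.sqrt (dot (nbar u) (nbar u))
      let ν' : ℝ → ℝ × ℝ := fun u => (nrm u)⁻¹ • nbar u
      dot (ν' t) (ν' t) = 1 ∧
      dot (deriv γ' t) (ν' t) = 0 ∧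
      dot (deriv ν' t) (Jrot (ν' t)) =
        (a11 * a22 - a12 * a21) * dot (deriv ν t) (Jrot (ν t)) / (nrm t) ^ 2 ∧
      dot (deriv γ' t) (Jrot (ν' t)) = nrm t * dot (deriv γ t) (Jrot (ν t)) := by
  intro t ht γ' nbar nrm ν'
  have hγd : HasDerivAt γ (deriv γ t) t := (hγ.differentiable (by simp) t).hasDerivAt
  have hνd : HasDerivAt ν (deriv ν t) t := (hν.differentiable (by simp) t).hasDerivAt
  have hx : HasDerivAt (fun u => (γ u).1) (deriv γ t).1 t := by
    simpa using (hγd.hasFDerivAt.fst).hasDerivAt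
  have hy : HasDerivAt (fun u => (γ u).2) (deriv γ t).2 t := by
    simpa using (hγd.hasFDerivAt.snd).hasDerivAt
  have ha : HasDerivAt (fun u => (ν u).1) (deriv ν t).1 t := by
    simpa using (hνd.hasFDerivAt.fst).hasDerivAt
  have hb : HasDerivAt (fun u => (ν u).2) (deriv ν t).2 t := by
    simpa using (hνd.hasFDerivAt.snd).hasDerivAt
  have hab : (ν t).1 * (ν t).1 + (ν t).2 * (ν t).2 = 1 := hunit t ht
  have hlg : (deriv γ t).1 * (ν t).1 + (deriv γ t).2 * (ν t).2 = 0 := hleg t ht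
  -- derivatives of nbar components
  have hn1 : HasDerivAt (fun u => a22 * (ν u).1 - a21 * (ν u).2)
      (a22 * (deriv ν t).1 - a21 * (deriv ν t).2) t :=
    (ha.const_mul a22).sub (hb.const_mul a21)
  have hn2 : HasDerivAt (fun u => -a12 * (ν u).1 + a11 * (ν u).2)
      (-a12 * (deriv ν t).1 + a11 * (deriv ν t).2) t :=
    (ha.const_mul (-a12)).add (hb.const_mul a11)
  have hnbar : HasDerivAt nbar
      (a22 * (deriv ν t).1 - a21 * (deriv ν t).2,
       -a12 * (deriv ν t).1 + a11 * (deriv ν t).2) t := HasDerivAt.prodMk hn1 hn2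
  -- positivity of Q := dot (nbar t) (nbar t)
  have hqval : dot (nbar t) (nbar t) =
      (a22 * (ν t).1 - a21 * (ν t).2) * (a22 * (ν t).1 - a21 * (ν t).2) +
        (-a12 * (ν t).1 + a11 * (ν t).2) * (-a12 * (ν t).1 + a11 * (ν t).2) := rfl
  have hqpos : 0 < dot (nbar t) (nbar t) := by
    rw [hqval]
    rcases lt_or_eq_of_le (by nlinarith [mul_self_nonneg (a22 * (ν t).1 - a21 * (ν t).2), mul_self_nonneg (-a12 * (ν t).1 + a11 * (ν t).2)] :
        (0:ℝ) ≤ (a22 * (ν t).1 - a21 * (ν t).2) * (a22 * (ν t).1 - a21 * (ν t).2) +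
          (-a12 * (ν t).1 + a11 * (ν t).2) * (-a12 * (ν t).1 + a11 * (ν t).2)) with h | h
    · exact h
    · exfalso
      have h1 : a22 * (ν t).1 - a21 * (ν t).2 = 0 := by
        nlinarith [mul_self_nonneg (a22 * (ν t).1 - a21 * (ν t).2),
          mul_self_nonneg (-a12 * (ν t).1 + a11 * (ν t).2)]
      have h2 : -a12 * (ν t).1 + a11 * (ν t).2 = 0 := by
        nlinarith [mul_self_nonneg (a22 * (ν t).1 - a21 * (ν t).2),
          mul_self_nonneg (-a12 * (ν t).1 + a11 * (ν t).2)]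
      have hA : (a11 * a22 - a12 * a21) * (ν t).1 = 0 := by linear_combination a21 * h2 + a11 * h1
      have hB : (a11 * a22 - a12 * a21) * (ν t).2 = 0 := by linear_combination a22 * h2 + a12 * h1
      have h3 : (ν t).1 = 0 := by
        rcases mul_eq_zero.mp hA with h' | h'
        · exact absurd h' hdet
        · exact h'
      have h4 : (ν t).2 = 0 := by
        rcases mul_eq_zero.mp hB with h' | h'
        · exact absurd h' hdet
        · exact h'
      rw [h3, h4] at hab; norm_num at hab
  have hqne : dot (nbar t) (nbar t) ≠ 0 := ne_of_gt hqpos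
  -- derivative of Q
  have hqfun : HasDerivAt (fun u => dot (nbar u) (nbar u))
      ((a22 * (deriv ν t).1 - a21 * (deriv ν t).2) * (a22 * (ν t).1 - a21 * (ν t).2) +
        (a22 * (ν t).1 - a21 * (ν t).2) * (a22 * (deriv ν t).1 - a21 * (deriv ν t).2) +
        ((-a12 * (deriv ν t).1 + a11 * (deriv ν t).2) * (-a12 * (ν t).1 + a11 * (ν t).2) +
          (-a12 * (ν t).1 + a11 * (ν t).2) * (-a12 * (deriv ν t).1 + a11 * (deriv ν t).2))) t :=
    (hn1.mul hn1).add (hn2.mul hn2)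
  -- derivative of nrm
  have hnrm : HasDerivAt nrm
      (((a22 * (deriv ν t).1 - a21 * (deriv ν t).2) * (a22 * (ν t).1 - a21 * (ν t).2) +
        (a22 * (ν t).1 - a21 * (ν t).2) * (a22 * (deriv ν t).1 - a21 * (deriv ν t).2) +
        ((-a12 * (deriv ν t).1 + a11 * (deriv ν t).2) * (-a12 * (ν t).1 + a11 * (ν t).2) +
          (-a12 * (ν t).1 + a11 * (ν t).2) * (-a12 * (deriv ν t).1 + a11 * (deriv ν t).2))) /
        (2 * Real.sqrt (dot (nbar t) (nbar t)))) t := hqfun.sqrt hqne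
  have hsqpos : 0 < Real.sqrt (dot (nbar t) (nbar t)) := Real.sqrt_pos.mpr hqpos
  have hsq : Real.sqrt (dot (nbar t) (nbar t)) * Real.sqrt (dot (nbar t) (nbar t)) =
      dot (nbar t) (nbar t) := Real.mul_self_sqrt hqpos.le
  have hnrmt : nrm t = Real.sqrt (dot (nbar t) (nbar t)) := rfl
  have hnrmne : nrm t ≠ 0 := by rw [hnrmt]; exact ne_of_gt hsqpos
  set dQ : ℝ :=
      (a22 * (deriv ν t).1 - a21 * (deriv ν t).2) * (a22 * (ν t).1 - a21 * (ν t).2) +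
        (a22 * (ν t).1 - a21 * (ν t).2) * (a22 * (deriv ν t).1 - a21 * (deriv ν t).2) +
        ((-a12 * (deriv ν t).1 + a11 * (deriv ν t).2) * (-a12 * (ν t).1 + a11 * (ν t).2) +
          (-a12 * (ν t).1 + a11 * (ν t).2) * (-a12 * (deriv ν t).1 + a11 * (deriv ν t).2))
    with hdQ
  have hinv : HasDerivAt (fun u => (nrm u)⁻¹)
      (-(dQ / (2 * Real.sqrt (dot (nbar t) (nbar t)))) / (nrm t) ^ 2) t := hnrm.inv hnrmne
  have hν'd : HasDerivAt ν'
      ((nrm t)⁻¹ • (a22 * (deriv ν t).1 - a21 * (deriv ν t).2,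
          -a12 * (deriv ν t).1 + a11 * (deriv ν t).2) +
        (-(dQ / (2 * Real.sqrt (dot (nbar t) (nbar t)))) / (nrm t) ^ 2) • nbar t) t :=
    hinv.smul hnbar
  have hγ'd : HasDerivAt γ'
      (a11 * (deriv γ t).1 + a12 * (deriv γ t).2,
       a21 * (deriv γ t).1 + a22 * (deriv γ t).2) t :=
    HasDerivAt.prodMk ((hx.const_mul a11).add (hy.const_mul a12))
      ((hx.const_mul a21).add (hy.const_mul a22))
  have hdγ' : deriv γ' t = (a11 * (deriv γ t).1 + a12 * (deriv γ t).2,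
      a21 * (deriv γ t).1 + a22 * (deriv γ t).2) := hγ'd.deriv
  have hdν' : deriv ν' t =
      (nrm t)⁻¹ • (a22 * (deriv ν t).1 - a21 * (deriv ν t).2,
          -a12 * (deriv ν t).1 + a11 * (deriv ν t).2) +
        (-(dQ / (2 * Real.sqrt (dot (nbar t) (nbar t)))) / (nrm t) ^ 2) • nbar t := hν'd.deriv
  have hν't : ν' t = (nrm t)⁻¹ • nbar t := rfl
  -- handy: inverse relations for s := nrm t
  have hs2 : nrm t * nrm t = dot (nbar t) (nbar t) := by rw [hnrmt]; exact hsq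
  have hinv1 : (nrm t)⁻¹ * (nrm t)⁻¹ * (dot (nbar t) (nbar t)) = 1 := by
    rw [← hs2]; field_simp
  have hinv2 : (nrm t)⁻¹ * (dot (nbar t) (nbar t)) = nrm t := by
    rw [← hs2]; field_simp
  rw [hqval] at hinv1 hinv2
  refine ⟨?_, ?_, ?_, ?_⟩
  · -- unit norm
    rw [hν't]
    simp only [dot, Prod.smul_fst, Prod.smul_snd, smul_eq_mul]
    linear_combination hinv1
  · -- tangency
    rw [hdγ', hν't]
    simp only [dot, Prod.smul_fst, Prod.smul_snd, smul_eq_mul]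
    linear_combination ((nrm t)⁻¹ * (a11 * a22 - a12 * a21)) * hlg
  · -- curvature ℓ
    rw [hdν', hν't, hnrmt]
    simp only [dot, Jrot, Prod.smul_fst, Prod.smul_snd, Prod.fst_add, Prod.snd_add,
      smul_eq_mul]
    ring
  · -- curvature β
    rw [hdγ', hν't]
    simp only [dot, Jrot, Prod.smul_fst, Prod.smul_snd, smul_eq_mul]
    linear_combination
      ((deriv γ t).2 * (ν t).1 - (deriv γ t).1 * (ν t).2) * hinv2 +
      ((nrm t)⁻¹ * ((a11 * a12 + a21 * a22) +
          ((a12 ^ 2 + a22 ^ 2) - (a11 ^ 2 + a21 ^ 2)) * (ν t).1 * (ν t).2 -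
          2 * (a11 * a12 + a21 * a22) * (ν t).2 ^ 2)) * hlg +
      ((nrm t)⁻¹ * ((a11 ^ 2 + a21 ^ 2) * (ν t).2 * (deriv γ t).1 -
          ((a12 ^ 2 + a22 ^ 2) * (ν t).1 - 2 * (a11 * a12 + a21 * a22) * (ν t).2) *
            (deriv γ t).2)) * hab
end
end

section
/- Let n, k ∈ ℕ with n,k ≥ 1, m = n+k, and let f: ℝ → ℝ be smooth with f(0) ≠ 0. Define γ(t) = (tⁿ, tᵐ f(t)) and ν(t) = (−m tᵏ f(t) − t^{k+1} f'(t), n)/√((m tᵏ f(t)+t^{k+1} f'(t))² + n²). Then (γ,ν) is a Legendre curve (in a neighborhood of 0), and its curvature (ℓ,β) satisfies ℓ(t) = n t^{k−1}(mk f(t) + (m+k+1)t f'(t) + t² f''(t)) / ((m tᵏ f(t)+t^{k+1} f'(t))² + n²) and β(t) = −t^{n−1} √((m tᵏ f(t)+t^{k+1} f'(t))² + n²). -/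
set_option maxHeartbeats 1000000

open scoped ContDiff

noncomputable section

/-- The Legendre curve of type (n,m): γ(t) = (tⁿ, tᵐ f(t)) with its canonical
unit normal, and its curvature (ℓ,β), in a neighborhood of 0. -/
theorem type_nm_curvature (n k : ℕ) (hn : 1 ≤ n) (hk : 1 ≤ k) (m : ℕ) (hm : m = n + k)
    (f : ℝ → ℝ) (hf : ContDiff ℝ (⊤ : ℕ∞) f) (hf0 : f 0 ≠ 0) :
    let A : ℝ → ℝ := fun t => (m : ℝ) * t ^ k * f t + t ^ (k + 1) * deriv f t
    let D : ℝ → ℝ := fun t => (A t) ^ 2 + (n : ℝ) ^ 2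
    let γ : ℝ → ℝ × ℝ := fun t => (t ^ n, t ^ m * f t)
    let ν : ℝ → ℝ × ℝ := fun t => (Real.sqrt (D t))⁻¹ • (-(A t), (n : ℝ))
    ∀ᶠ t in nhds (0 : ℝ),
      dot (ν t) (ν t) = 1 ∧
      dot (deriv γ t) (ν t) = 0 ∧
      dot (deriv ν t) (Jrot (ν t)) =
        (n : ℝ) * t ^ (k - 1) *
          ((m : ℝ) * k * f t + ((m : ℝ) + k + 1) * t * deriv f t
            + t ^ 2 * deriv (deriv f) t) / D t ∧
      dot (deriv γ t) (Jrot (ν t)) = -(t ^ (n - 1)) * Real.sqrt (D t) := by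
  obtain ⟨n, rfl⟩ : ∃ n', n = n' + 1 := ⟨n - 1, by omega⟩
  obtain ⟨k, rfl⟩ : ∃ k', k = k' + 1 := ⟨k - 1, by omega⟩
  subst hm
  intro A D γ ν
  have hfi : ContDiff ℝ ∞ f := hf.of_le (by simp)
  have hf1 : ContDiff ℝ ∞ (deriv f) := (contDiff_infty_iff_deriv.mp hfi).2
  have hfd : ∀ x, HasDerivAt f (deriv f x) x := fun x =>
    ((hf.differentiable (by simp)) x).hasDerivAt
  have hfd' : ∀ x, HasDerivAt (deriv f) (deriv (deriv f) x) x := fun x =>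
    ((hf1.differentiable (by simp)) x).hasDerivAt
  have hDpos : ∀ t, 0 < D t := by
    intro t
    have h1 : (0:ℝ) < (((n+1:ℕ)):ℝ)^2 := by positivity
    have h2 : (0:ℝ) ≤ (A t)^2 := sq_nonneg _
    simp only [D]; linarith
  filter_upwards with t
  have e1 : n+1+(k+1)-1 = n+k+1 := by omega
  have e2 : k+1-1 = k := by omega
  have e3 : k+1+1-1 = k+1 := by omega
  have e4 : n+1-1 = n := by omega
  have hA : HasDerivAt A
      (t^k * ((((n:ℝ)+1+((k:ℝ)+1)) * ((k:ℝ)+1)) * f t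
        + ((((n:ℝ)+1+((k:ℝ)+1)) + ((k:ℝ)+1) + 1) * t) * deriv f t
        + t^2 * deriv (deriv f) t)) t := by
    have h := (((hasDerivAt_pow (k+1) t).const_mul (((n+1+(k+1):ℕ)):ℝ)).mul (hfd t)).add
      ((hasDerivAt_pow (k+1+1) t).mul (hfd' t))
    refine h.congr_deriv ?_
    simp only [e2, e3]
    push_cast
    ring
  have hAexp : A t = (((n:ℝ)+1+((k:ℝ)+1))) * t ^ (k+1) * f t + t ^ (k+1+1) * deriv f t := by
    simp only [A]; push_cast; ring
  have hD : HasDerivAt D _ t := (hA.pow 2).add_const ((((n+1:ℕ)):ℝ)^2)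
  have hDexp : D t = (A t)^2 + ((n:ℝ)+1)^2 := by simp only [D]; push_cast; ring
  have hs : HasDerivAt (fun x => Real.sqrt (D x)) _ t :=
    (Real.hasDerivAt_sqrt (hDpos t).ne').comp t hD
  obtain ⟨c, hc⟩ : ∃ c, HasDerivAt (fun x => (Real.sqrt (D x))⁻¹) c t :=
    ⟨_, hs.inv (Real.sqrt_ne_zero'.mpr (hDpos t))⟩
  have hν : HasDerivAt ν _ t := hc.smul (HasDerivAt.prodMk (hA.neg) (hasDerivAt_const t (((n+1:ℕ)):ℝ)))
  have hγ : HasDerivAt γ _ t :=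
    (hasDerivAt_pow (n+1) t).prodMk ((hasDerivAt_pow (n+1+(k+1)) t).mul (hfd t))
  rw [hγ.deriv, hν.deriv]
  set S := Real.sqrt (D t) with hSdef
  have hS0 : S ≠ 0 := ne_of_gt (Real.sqrt_pos.mpr (hDpos t))
  have hS2 : S ^ 2 = (A t)^2 + ((n:ℝ)+1)^2 := by
    rw [hSdef, Real.sq_sqrt (hDpos t).le, hDexp]
  refine ⟨?_, ?_, ?_, ?_⟩
  · simp only [ν, dot, Prod.smul_mk, smul_eq_mul, ← hSdef]
    push_cast
    field_simp
    linear_combination -hS2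
  · simp only [ν, dot, Prod.smul_mk, smul_eq_mul, ← hSdef, e1, e4]
    push_cast
    field_simp
    linear_combination (-(((n:ℝ)+1) * t^n)) * hAexp
  · simp only [ν, dot, Jrot, Prod.smul_mk, smul_eq_mul, Prod.mk_add_mk, Prod.fst_add,
      Prod.snd_add, ← hSdef, e2]
    push_cast
    rw [eq_div_iff (hDpos t).ne', hDexp]
    field_simp
    linear_combination (-(((n:ℝ)+1) * t^k * ((((n:ℝ)+1+((k:ℝ)+1)) * ((k:ℝ)+1)) * f t
        + ((((n:ℝ)+1+((k:ℝ)+1)) + ((k:ℝ)+1) + 1) * t) * deriv f t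
        + t^2 * deriv (deriv f) t))) * hS2
  · simp only [ν, dot, Jrot, Prod.smul_mk, smul_eq_mul, ← hSdef, e1, e4]
    push_cast
    field_simp
    linear_combination (t^n : ℝ) * hS2 + t^n * A t * hAexp
end
end

section
/- Let f, g: I → ℝ be smooth functions on an interval I whose zero sets are finite and equal, Z(f) = Z(g) = {t₁,…,tₙ}, and such that at each common zero tᵢ both f and g have the same finite contact order. Then there exists a smooth nowhere-zero function λ: I → ℝ with f(t) = λ(t) g(t) for all t ∈ I. -/
noncomputable section

open scoped ContDiff in
-- analyticity helpers
lemma cd_deriv {g : ℝ → ℝ} (hg : ContDiff ℝ ∞ g) : ContDiff ℝ ∞ (deriv g) :=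
  (contDiff_infty_iff_deriv.1 hg).2

open scoped ContDiff in
lemma cd_iteratedDeriv {g : ℝ → ℝ} (hg : ContDiff ℝ ∞ g) (n : ℕ) :
    ContDiff ℝ ∞ (iteratedDeriv n g) := by
  induction n with
  | zero => simpa [iteratedDeriv_zero] using hg
  | succ n ih => rw [iteratedDeriv_succ]; exact cd_deriv ih

/-- weighted averages along segments from `a` -/
def avgK (a : ℝ) (ψ : ℝ → ℝ) (k : ℕ) (x : ℝ) : ℝ :=
  ∫ t in (0:ℝ)..1, t ^ k * ψ (a + t * (x - a))

open scoped ContDiff in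
lemma avgK_hasDerivAt (a : ℝ) {ψ : ℝ → ℝ} (hψ : ContDiff ℝ ∞ ψ) (k : ℕ) (x₀ : ℝ) :
    HasDerivAt (avgK a ψ k) (avgK a (deriv ψ) (k + 1) x₀) x₀ := by
  have hd : Differentiable ℝ ψ := hψ.differentiable (by simp)
  have hc' : Continuous (deriv ψ) := hψ.continuous_deriv (by simp)
  have hcont : Continuous (fun p : ℝ × ℝ => p.1 ^ (k + 1) * deriv ψ (a + p.1 * (p.2 - a))) := by
    fun_prop
  obtain ⟨C, hC⟩ := (isCompact_Icc.prod (isCompact_closedBall x₀ 1)).exists_bound_of_continuousOn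
    hcont.continuousOn
  have key := hasDerivAt_integral_of_dominated_loc_of_deriv_le
    (μ := MeasureTheory.volume.restrict (Set.Ioc (0:ℝ) 1)) (x₀ := x₀)
    (F := fun x t => t ^ k * ψ (a + t * (x - a)))
    (F' := fun x t => t ^ (k + 1) * deriv ψ (a + t * (x - a)))
    (bound := fun _ => C) (s := Metric.ball x₀ 1) (Metric.ball_mem_nhds x₀ one_pos)
    (Filter.Eventually.of_forall fun x => (by fun_prop : Continuous
      (fun t : ℝ => t ^ k * ψ (a + t * (x - a)))).aestronglyMeasurable)
    ((by fun_prop : Continuous (fun t : ℝ => t ^ k * ψ (a + t * (x₀ - a)))).integrableOn_Ioc)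
    ((by fun_prop : Continuous
      (fun t : ℝ => t ^ (k + 1) * deriv ψ (a + t * (x₀ - a)))).aestronglyMeasurable)
    ((MeasureTheory.ae_restrict_iff' measurableSet_Ioc).2 (Filter.Eventually.of_forall fun t ht x hx =>
      hC (t, x) ⟨Set.Ioc_subset_Icc_self ht, Metric.ball_subset_closedBall hx⟩))
    (MeasureTheory.integrableOn_const (by simp))
    (Filter.Eventually.of_forall fun t x _ => by
      have h1 : HasDerivAt (fun x => a + t * (x - a)) t x := by
        simpa using ((hasDerivAt_id x).sub_const a).const_mul t |>.const_add a
      have h2 := ((hd (a + t * (x - a))).hasDerivAt.comp x h1).const_mul (t ^ k)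
      exact h2.congr_deriv (by ring))
  unfold avgK
  simp only [intervalIntegral.integral_of_le zero_le_one]
  exact key.2

open scoped ContDiff in
lemma avgK_contDiff (a : ℝ) : ∀ n : ℕ, ∀ ψ : ℝ → ℝ, ContDiff ℝ ∞ ψ → ∀ k : ℕ,
    ContDiff ℝ n (avgK a ψ k) := by
  intro n
  induction n with
  | zero =>
    intro ψ hψ k
    have hc := hψ.continuous
    rw [Nat.cast_zero, contDiff_zero]
    unfold avgK
    exact intervalIntegral.continuous_parametric_intervalIntegral_of_continuous'
      (f := fun x t => t ^ k * ψ (a + t * (x - a))) (by fun_prop) 0 1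
  | succ n ih =>
    intro ψ hψ k
    rw [show ((n + 1 : ℕ) : WithTop ℕ∞) = (n : WithTop ℕ∞) + 1 by push_cast; rfl,
      contDiff_succ_iff_deriv]
    refine ⟨fun x => (avgK_hasDerivAt a hψ k x).differentiableAt, by simp, ?_⟩
    have hder : deriv (avgK a ψ k) = avgK a (deriv ψ) (k + 1) :=
      funext fun x => (avgK_hasDerivAt a hψ k x).deriv
    rw [hder]
    exact ih _ (cd_deriv hψ) _

open scoped ContDiff in
lemma cd_dslope {f : ℝ → ℝ} (hf : ContDiff ℝ ∞ f) (a : ℝ) :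
    ContDiff ℝ ∞ (dslope f a) := by
  have hd : Differentiable ℝ f := hf.differentiable (by simp)
  have hc' : Continuous (deriv f) := hf.continuous_deriv (by simp)
  have heq : dslope f a = avgK a (deriv f) 0 := by
    funext x
    unfold avgK
    rcases eq_or_ne x a with rfl | hx
    · simp [dslope_same]
    · rw [dslope_of_ne _ hx, slope_def_field]
      have hxa : x - a ≠ 0 := sub_ne_zero.2 hx
      have hG : ∀ t ∈ Set.uIcc (0:ℝ) 1, HasDerivAt (fun t => f (a + t * (x - a)) / (x - a))
          (t ^ 0 * deriv f (a + t * (x - a))) t := by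
        intro t _
        have h1 : HasDerivAt (fun t => a + t * (x - a)) (x - a) t := by
          simpa using ((hasDerivAt_id t).mul_const (x - a)).const_add a
        have h2 := ((hd (a + t * (x - a))).hasDerivAt.comp t h1).div_const (x - a)
        exact h2.congr_deriv (by rw [pow_zero, one_mul, mul_div_cancel_right₀ _ hxa])
      rw [intervalIntegral.integral_eq_sub_of_hasDerivAt hG
        ((by fun_prop : Continuous (fun t : ℝ => t ^ 0 * deriv f (a + t * (x - a)))).intervalIntegrable 0 1)]
      simp only [one_mul, zero_mul, add_zero, add_sub_cancel]
      ring
  rw [heq, contDiff_infty]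
  intro n
  exact avgK_contDiff a n _ (cd_deriv hf) 0

open scoped ContDiff in
lemma iteratedDeriv_sub_mul {g : ℝ → ℝ} (hg : ContDiff ℝ ∞ g) (a : ℝ) :
    ∀ n : ℕ, iteratedDeriv (n + 1) (fun x => (x - a) * g x) =
      fun x => (x - a) * iteratedDeriv (n + 1) g x + ((n : ℝ) + 1) * iteratedDeriv n g x := by
  have hd : ∀ m, Differentiable ℝ (iteratedDeriv m g) := fun m =>
    (cd_iteratedDeriv hg m).differentiable (by simp)
  intro n
  induction n with
  | zero =>
    funext x
    have h : HasDerivAt (fun x => (x - a) * g x) (1 * g x + (x - a) * deriv g x) x :=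
      ((hasDerivAt_id x).sub_const a).mul ((hg.differentiable (by simp)) x).hasDerivAt
    rw [iteratedDeriv_one, h.deriv]
    simp [iteratedDeriv_one, iteratedDeriv_zero]
    ring
  | succ n ih =>
    rw [iteratedDeriv_succ, ih]
    funext x
    have h : HasDerivAt
        (fun x => (x - a) * iteratedDeriv (n + 1) g x + ((n : ℝ) + 1) * iteratedDeriv n g x)
        ((1 * iteratedDeriv (n + 1) g x + (x - a) * deriv (iteratedDeriv (n + 1) g) x) +
          ((n : ℝ) + 1) * deriv (iteratedDeriv n g) x) x :=
      (((hasDerivAt_id x).sub_const a).mul (hd (n + 1) x).hasDerivAt).add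
        ((hd n x).hasDerivAt.const_mul _)
    rw [h.deriv]
    simp only [← iteratedDeriv_succ]
    push_cast
    ring

open scoped ContDiff in
lemma hadamard (a : ℝ) : ∀ (r : ℕ) (f : ℝ → ℝ), ContDiff ℝ ∞ f →
    (∀ i < r, iteratedDeriv i f a = 0) →
    ∃ h : ℝ → ℝ, ContDiff ℝ ∞ h ∧ (∀ x, f x = (x - a) ^ r * h x) ∧
      (r.factorial : ℝ) * h a = iteratedDeriv r f a := by
  intro r
  induction r with
  | zero =>
    intro f hf _
    exact ⟨f, hf, fun x => by simp, by simp [iteratedDeriv_zero]⟩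
  | succ r IH =>
    intro f hf h0
    have hfa : f a = 0 := by simpa [iteratedDeriv_zero] using h0 0 (Nat.succ_pos r)
    set g := dslope f a with hgdef
    have hgs : ContDiff ℝ ∞ g := cd_dslope hf a
    have hfg : ∀ x, f x = (x - a) * g x := by
      intro x
      have h1 := sub_smul_dslope f a x
      rw [hfa, sub_zero, smul_eq_mul] at h1
      exact h1.symm
    have hder : ∀ n : ℕ, iteratedDeriv (n + 1) f a = ((n : ℝ) + 1) * iteratedDeriv n g a := by
      intro n
      have hfid : f = fun x => (x - a) * g x := funext hfg
      rw [hfid, iteratedDeriv_sub_mul hgs a n]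
      simp
    have h0g : ∀ i < r, iteratedDeriv i g a = 0 := by
      intro i hi
      have h1 := h0 (i + 1) (by omega)
      rw [hder i] at h1
      have h2 : ((i : ℝ) + 1) ≠ 0 := by positivity
      exact (mul_eq_zero.mp h1).resolve_left h2
    obtain ⟨h, hh, hrep, hval⟩ := IH g hgs h0g
    refine ⟨h, hh, fun x => ?_, ?_⟩
    · rw [hfg x, hrep x]; ring
    · rw [hder r, ← hval, Nat.factorial_succ]
      push_cast
      ring

/-- f has contact order r at t₀: all derivatives of order < r vanish (including
the value itself) and the r-th derivative is nonzero. -/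
def contactOrd (f : ℝ → ℝ) (t₀ : ℝ) (r : ℕ) : Prop :=
  (∀ i < r, iteratedDeriv i f t₀ = 0) ∧ iteratedDeriv r f t₀ ≠ 0

/-- If smooth functions f and g on an interval have the same finite zero set and
the same finite contact order at each common zero, then f = λ g for some smooth
nowhere-zero λ. -/
theorem exists_nowhere_zero_factor (I : Set ℝ) (hI : Convex ℝ I)
    (f g : ℝ → ℝ) (hf : ContDiff ℝ (⊤ : ℕ∞) f) (hg : ContDiff ℝ (⊤ : ℕ∞) g)
    (hfin : {t ∈ I | f t = 0}.Finite)
    (hzero : {t ∈ I | f t = 0} = {t ∈ I | g t = 0})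
    (hord : ∀ t ∈ I, f t = 0 → ∃ r, 1 ≤ r ∧ contactOrd f t r ∧ contactOrd g t r) :
    ∃ lam : ℝ → ℝ, ContDiffOn ℝ (⊤ : ℕ∞) lam I ∧ (∀ t ∈ I, lam t ≠ 0) ∧
      ∀ t ∈ I, f t = lam t * g t := by
  classical
  have hiff : ∀ t ∈ I, (f t = 0 ↔ g t = 0) := by
    intro t ht
    constructor
    · intro h
      have h2 : t ∈ {t ∈ I | g t = 0} := hzero ▸ (⟨ht, h⟩ : t ∈ {t ∈ I | f t = 0})
      exact h2.2
    · intro h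
      have h2 : t ∈ {t ∈ I | f t = 0} := by
        rw [hzero]; exact ⟨ht, h⟩
      exact h2.2
  set lam : ℝ → ℝ := fun t =>
    if h : t ∈ I ∧ f t = 0 then
      iteratedDeriv (Classical.choose (hord t h.1 h.2)) f t /
        iteratedDeriv (Classical.choose (hord t h.1 h.2)) g t
    else f t / g t with hlam
  refine ⟨lam, ?_, ?_, ?_⟩
  · -- smoothness
    intro t ht
    by_cases hft : f t = 0
    · have hgt : g t = 0 := (hiff t ht).mp hft
      obtain ⟨hr1, cf, cg⟩ := Classical.choose_spec (hord t ht hft)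
      set r := Classical.choose (hord t ht hft) with hrdef
      obtain ⟨F, hFs, hFrep, hFval⟩ := hadamard t r f hf cf.1
      obtain ⟨G, hGs, hGrep, hGval⟩ := hadamard t r g hg cg.1
      have hrfac : (r.factorial : ℝ) ≠ 0 := by positivity
      have hFt : F t ≠ 0 := fun h => cf.2 (by rw [← hFval, h, mul_zero])
      have hGt : G t ≠ 0 := fun h => cg.2 (by rw [← hGval, h, mul_zero])
      have hSfin : ({s ∈ I | f s = 0} \ {t}).Finite := hfin.diff
      have hUopen : IsOpen ((({s ∈ I | f s = 0} \ {t})ᶜ : Set ℝ) ∩ {s | G s ≠ 0}) :=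
        hSfin.isClosed.isOpen_compl.inter (isOpen_ne.preimage hGs.continuous)
      set U := (({s ∈ I | f s = 0} \ {t})ᶜ : Set ℝ) ∩ {s | G s ≠ 0} with hUdef
      have htU : t ∈ U := ⟨fun h => h.2 rfl, hGt⟩
      have hkey : ∀ s, s ∈ U → s ∈ I → lam s = F s / G s := by
        rintro s ⟨hs1, hs2⟩ hsI
        by_cases hfs : f s = 0
        · have hst : s = t := by
            by_contra hne
            exact hs1 ⟨⟨hsI, hfs⟩, hne⟩
          subst hst
          have h1 : lam s = iteratedDeriv r f s / iteratedDeriv r g s := by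
            simp only [hlam]
            rw [dif_pos ⟨hsI, hfs⟩]
          rw [h1, ← hFval, ← hGval, mul_div_mul_left _ _ hrfac]
        · have hne : s ≠ t := fun h => hfs (h ▸ hft)
          have h1 : lam s = f s / g s := by
            simp only [hlam]
            rw [dif_neg (fun h => hfs h.2)]
          rw [h1, hFrep s, hGrep s,
            mul_div_mul_left _ _ (pow_ne_zero r (sub_ne_zero.2 hne))]
      have hc : ContDiffAt ℝ (⊤ : ℕ∞) (fun s => F s / G s) t := hFs.contDiffAt.div hGs.contDiffAt hGt
      apply hc.contDiffWithinAt.congr_of_eventuallyEq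
      · filter_upwards [nhdsWithin_le_nhds (hUopen.mem_nhds htU), self_mem_nhdsWithin] with
          s hsU hsI
        exact hkey s hsU hsI
      · exact hkey t htU ht
    · have hgt : g t ≠ 0 := fun h => hft ((hiff t ht).mpr h)
      have hev : ∀ᶠ s in nhds t, lam s = f s / g s := by
        filter_upwards [hf.continuous.continuousAt.eventually_ne hft] with s hs
        simp only [hlam]
        rw [dif_neg (fun h => hs h.2)]
      have hca : ContDiffAt ℝ (⊤ : ℕ∞) (fun s => f s / g s) t := hf.contDiffAt.div hg.contDiffAt hgt
      exact (hca.congr_of_eventuallyEq hev).contDiffWithinAt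
  · -- nonvanishing
    intro t ht
    by_cases hft : f t = 0
    · obtain ⟨hr1, cf, cg⟩ := Classical.choose_spec (hord t ht hft)
      have h1 : lam t = iteratedDeriv (Classical.choose (hord t ht hft)) f t /
          iteratedDeriv (Classical.choose (hord t ht hft)) g t := by
        simp only [hlam]; rw [dif_pos ⟨ht, hft⟩]
      rw [h1]
      exact div_ne_zero cf.2 cg.2
    · have hgt : g t ≠ 0 := fun h => hft ((hiff t ht).mpr h)
      have h1 : lam t = f t / g t := by
        simp only [hlam]; rw [dif_neg (fun h => hft h.2)]
      rw [h1]
      exact div_ne_zero hft hgt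
  · -- factorization
    intro t ht
    by_cases hgt : g t = 0
    · rw [hgt, mul_zero]
      exact (hiff t ht).mpr hgt
    · have hft : f t ≠ 0 := fun h => hgt ((hiff t ht).mp h)
      have h1 : lam t = f t / g t := by
        simp only [hlam]; rw [dif_neg (fun h => hft h.2)]
      rw [h1, div_mul_cancel₀ _ hgt]
end
end
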